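/- arXiv:2605.02304 — 2 statements merged into one kernel-verified Lean document; each statement's English description precedes it below -/
import Mathlib

section
/- Let (X,T) be a system, u a fixed minimal idempotent in a minimal left ideal M of βT, and define for A ⊆ uX the closure cl_{τ^[d]}(A) = {x ∈ uX : x^[d]_* ∈ u^[d]_*(u^[d]_* ∘ Δ^[d]_*(A))}, where ∘ is the circle operation for the face group F^[d]_* action on X^{2^d−1}. Then cl_{τ^[d]} is a closure operator: A ⊆ cl_{τ^[d]}(A), it is monotone, and cl_{τ^[d]}(cl_{τ^[d]}(A)) = cl_{τ^[d]}(A). -/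
attribute [local instance] Ultrafilter.mul Ultrafilter.semigroup

/-- Nonempty subsets of `[d]`: the starred coordinates of the `d`-cube. -/
def CubeStar (d : ℕ) : Type := {ε : Finset (Fin d) // ε.Nonempty}

/-- The starred face cube group of order `d` of the group `T`: the subgroup of
`T^{2^d-1}` generated by the elements `g^{(α)}`, `α` an upper facet. -/
def faceGroupStar (T : Type*) [Group T] (d : ℕ) : Subgroup (CubeStar d → T) :=
  Subgroup.closure {f | ∃ t : T, ∃ j : Fin d, f = fun ε => if j ∈ ε.1 then t else 1}

/-- The action of an ultrafilter `p ∈ βT` on a point of a compact Hausdorff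
`T`-space: `p x = lim_{t → p} t x`. -/
noncomputable def uact {T : Type*} [Group T] {X : Type*} [TopologicalSpace X]
    [MulAction T X] (p : Ultrafilter T) (x : X) : X :=
  @Filter.lim X _ ⟨x⟩ (Filter.map (fun t : T => t • x) (p : Filter T))

/-- The circle operation `u^[d]_* ∘ B` for the face group acting diagonally on
`X^{2^d-1}`: `z ∈ u∘B` iff there are nets `f_λ ∈ F^[d]_*` with `f_λ → u^[d]_*`
(coordinatewise in `βT`) and `b_λ ∈ B` with `f_λ b_λ → z`. -/
def circOp {T : Type*} [Group T] {X : Type*} [TopologicalSpace X] [MulAction T X]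
    (d : ℕ) (u : Ultrafilter T) (B : Set (CubeStar d → X)) : Set (CubeStar d → X) :=
  {z | (((fun _ => u) : CubeStar d → Ultrafilter T), z) ∈ closure
    {q : (CubeStar d → Ultrafilter T) × (CubeStar d → X) |
      ∃ f ∈ faceGroupStar T d, ∃ b ∈ B,
        q = (fun ε => (pure (f ε) : Ultrafilter T), fun ε => f ε • b ε)}}

/-- The `τ^[d]`-closure of `A ⊆ uX`:
`cl(A) = {x ∈ uX : x^[d]_* ∈ u^[d]_*(u^[d]_* ∘ Δ^[d]_*(A))}`. -/
noncomputable def clTau {T : Type*} [Group T] {X : Type*} [TopologicalSpace X]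
    [MulAction T X] (d : ℕ) (u : Ultrafilter T) (A : Set X) : Set X :=
  {x | x ∈ uact u '' (Set.univ : Set X) ∧
    (fun _ : CubeStar d => x) ∈
      (fun z : CubeStar d → X => fun ε => uact u (z ε)) ''
        circOp d u ((fun a : X => fun _ : CubeStar d => a) '' A)}

/-- `M` is a minimal left ideal of the semigroup `βT`. -/
def IsMinimalLeftIdeal {T : Type*} [Group T] (M : Set (Ultrafilter T)) : Prop :=
  (M.Nonempty ∧ ∀ p ∈ M, ∀ q : Ultrafilter T, q * p ∈ M) ∧
    ∀ N ⊆ M, (N.Nonempty ∧ ∀ p ∈ N, ∀ q : Ultrafilter T, q * p ∈ N) → N = M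

/-! The diagonal `u^[d]_*` lies in the closure `E` of the face group `F^[d]_*` inside
`(βT)^{2^d-1}`: it is the product of the facet elements that are `u` on the faces containing `j`
and `1` elsewhere (using `u * u = u`), and `E` is closed under products because `p ↦ p q` and
`q ↦ t q` (`t ∈ T`) are continuous on `βT`. Pushing `E` forward along `g ↦ g w` gives
`u^[d]_* w ∈ u^[d]_* ∘ D` for `w ∈ D`, which yields extensivity on `uX`. Right multiplication by
`u^[d]_*` is continuous and commutes with the face group action, so
`u^[d]_* ∘ (u^[d]_* ∘ B) ⊆ (u^[d]_* u^[d]_*) ∘ B = u^[d]_* ∘ B`; idempotence follows from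
`Δ(cl A) ⊆ u^[d]_*(u^[d]_* ∘ ΔA) ⊆ u^[d]_* ∘ (u^[d]_* ∘ ΔA)`. -/

open Filter Topology Set

namespace Ultrafilter

variable {M : Type*}

theorem pure_mul [Mul M] (a : M) (q : Ultrafilter M) :
    (pure a : Ultrafilter M) * q = q.map (a * ·) :=
  coe_inj.mp <| Filter.ext' fun _ => by simp [eventually_mul]

theorem pure_mul_pure [Mul M] (a b : M) :
    (pure a : Ultrafilter M) * pure b = pure (a * b) := by
  simp [pure_mul]

theorem pure_one_mul [MulOneClass M] (q : Ultrafilter M) : (pure 1 : Ultrafilter M) * q = q := by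
  simp [pure_mul]

theorem mul_pure_one [MulOneClass M] (p : Ultrafilter M) : p * (pure 1 : Ultrafilter M) = p :=
  coe_inj.mp <| Filter.ext' fun _ => by simp [eventually_mul]

theorem continuous_map (g : M → M) : Continuous (Ultrafilter.map g) := by
  refine ultrafilterBasis_is_basis.continuous_iff.2 ?_
  rintro _ ⟨s, rfl⟩
  exact ultrafilter_isOpen_basic (g ⁻¹' s)

theorem continuous_pure_mul [Mul M] (a : M) : Continuous ((pure a : Ultrafilter M) * ·) := by
  simpa only [pure_mul] using continuous_map (a * ·)

end Ultrafilter

theorem mul_mem_closure_of_forall_mul_mem {S : Type*} [Mul S] [TopologicalSpace S] {H : Set S}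
    (hH : ∀ a ∈ H, ∀ b ∈ H, a * b ∈ H) (hr : ∀ b : S, Continuous (· * b))
    (hl : ∀ a ∈ H, Continuous (a * ·)) {x y : S} (hx : x ∈ closure H) (hy : y ∈ closure H) :
    x * y ∈ closure H := by
  have hHy : MapsTo (· * y) H (closure H) := fun a ha =>
    (MapsTo.closure (fun b hb => hH a ha b hb) (hl a ha)) hy
  exact hHy.closure_left (hr y) isClosed_closure hx

section UltrafilterAction

variable {T : Type*} [Group T] {X : Type*} [TopologicalSpace X] [CompactSpace X] [T2Space X]
  [MulAction T X]

theorem uact_eq_extend (p : Ultrafilter T) (x : X) :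
    uact p x = Ultrafilter.extend (· • x) p :=
  lim_eq (ultrafilter_extend_eq_iff.mp rfl)

theorem uact_eq_iff {p : Ultrafilter T} {x y : X} :
    uact p x = y ↔ Tendsto (· • x) (p : Filter T) (𝓝 y) := by
  rw [uact_eq_extend, ultrafilter_extend_eq_iff, Ultrafilter.coe_map]
  rfl

theorem uact_pure (t : T) (x : X) : uact (pure t) x = t • x := by
  rw [uact_eq_extend, ultrafilter_extend_pure]

theorem continuous_uact (x : X) : Continuous fun p : Ultrafilter T => uact p x := by
  simpa only [uact_eq_extend] using continuous_ultrafilter_extend _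

theorem uact_mul (hc : ∀ t : T, Continuous fun x : X => t • x) (p q : Ultrafilter T) (x : X) :
    uact (p * q) x = uact p (uact q x) := by
  have hpure (t : T) : uact (pure t * q) x = t • uact q x := by
    rw [Ultrafilter.pure_mul, uact_eq_iff, Ultrafilter.coe_map, tendsto_map'_iff]
    have hq := uact_eq_iff.mp (rfl : uact q x = _)
    simpa only [Function.comp_def, mul_smul] using ((hc t).tendsto _).comp hq
  have hagree := DenseRange.equalizer denseRange_pure
    ((continuous_uact x).comp (Ultrafilter.continuous_mul_left q)) (continuous_uact (uact q x))
    (funext fun t => by simp only [Function.comp_apply, hpure, uact_pure])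
  exact congrFun hagree p

theorem uact_idem (hc : ∀ t : T, Continuous fun x : X => t • x) {u : Ultrafilter T}
    (hidem : u * u = u) (x : X) : uact u (uact u x) = uact u x := by
  rw [← uact_mul hc, hidem]

end UltrafilterAction

section FaceGroupClosure

variable {T : Type*} [Group T] {d : ℕ}

def pureFaceGroupStar (T : Type*) [Group T] (d : ℕ) : Set (CubeStar d → Ultrafilter T) :=
  (fun f ε => pure (f ε)) '' (faceGroupStar T d : Set (CubeStar d → T))

theorem mul_mem_closure_pureFaceGroupStar {g₁ g₂ : CubeStar d → Ultrafilter T}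
    (h₁ : g₁ ∈ closure (pureFaceGroupStar T d)) (h₂ : g₂ ∈ closure (pureFaceGroupStar T d)) :
    g₁ * g₂ ∈ closure (pureFaceGroupStar T d) := by
  refine mul_mem_closure_of_forall_mul_mem ?_ (fun g => ?_) ?_ h₁ h₂
  · rintro _ ⟨f₁, hf₁, rfl⟩ _ ⟨f₂, hf₂, rfl⟩
    exact ⟨f₁ * f₂, mul_mem hf₁ hf₂, funext fun ε => (Ultrafilter.pure_mul_pure _ _).symm⟩
  · exact continuous_pi fun ε =>
      (Ultrafilter.continuous_mul_left (g ε)).comp (continuous_apply ε)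
  · rintro _ ⟨f, -, rfl⟩
    exact continuous_pi fun ε =>
      (Ultrafilter.continuous_pure_mul (f ε)).comp (continuous_apply ε)

theorem facet_mem_closure_pureFaceGroupStar (p : Ultrafilter T) (j : Fin d) :
    (fun ε : CubeStar d => if j ∈ ε.1 then p else pure 1) ∈ closure (pureFaceGroupStar T d) := by
  have hcont : Continuous fun (q : Ultrafilter T) (ε : CubeStar d) =>
      if j ∈ ε.1 then q else pure 1 :=
    continuous_pi fun ε => continuous_id.if_const _ continuous_const
  have hpure : MapsTo (fun (q : Ultrafilter T) (ε : CubeStar d) => if j ∈ ε.1 then q else pure 1)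
      (range pure) (pureFaceGroupStar T d) := by
    rintro _ ⟨t, rfl⟩
    refine ⟨fun ε => if j ∈ ε.1 then t else 1, Subgroup.subset_closure ⟨t, j, rfl⟩, ?_⟩
    funext ε
    dsimp only
    split_ifs <;> rfl
  exact hpure.closure hcont (denseRange_pure p)

theorem const_mem_closure_pureFaceGroupStar {u : Ultrafilter T} (hidem : u * u = u) :
    (fun _ : CubeStar d => u) ∈ closure (pureFaceGroupStar T d) := by
  let g (S : Finset (Fin d)) (ε : CubeStar d) : Ultrafilter T :=
    if Disjoint S ε.1 then pure 1 else u
  have hg : ∀ S, g S ∈ closure (pureFaceGroupStar T d) := by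
    intro S
    induction S using Finset.induction_on with
    | empty =>
      exact subset_closure ⟨1, one_mem _, funext fun ε => by simp [g]⟩
    | insert j S _ ih =>
      have hsplit : g (insert j S) = (fun ε => if j ∈ ε.1 then u else pure 1) * g S := by
        funext ε
        by_cases hj : j ∈ ε.1 <;> by_cases hS : Disjoint S ε.1 <;>
          simp [g, hj, hS, Finset.disjoint_insert_left, hidem, Ultrafilter.mul_pure_one,
            Ultrafilter.pure_one_mul]
      rw [hsplit]
      exact mul_mem_closure_pureFaceGroupStar (facet_mem_closure_pureFaceGroupStar u j) ih
  convert hg Finset.univ using 1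
  funext ε
  obtain ⟨i, hi⟩ := ε.2
  have hmeet : ¬Disjoint Finset.univ ε.1 := fun h =>
    Finset.disjoint_left.mp h (Finset.mem_univ i) hi
  simp only [g, hmeet, if_false]

end FaceGroupClosure

section CircleOperation

variable {T : Type*} [Group T] {X : Type*} [TopologicalSpace X] [MulAction T X] {d : ℕ}
  {u : Ultrafilter T}

def circOpGen (T : Type*) [Group T] {X : Type*} [MulAction T X] (d : ℕ)
    (B : Set (CubeStar d → X)) : Set ((CubeStar d → Ultrafilter T) × (CubeStar d → X)) :=
  {q | ∃ f ∈ faceGroupStar T d, ∃ b ∈ B, q = (fun ε => pure (f ε), fun ε => f ε • b ε)}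

theorem circOp_mono {B B' : Set (CubeStar d → X)} (h : B ⊆ B') :
    circOp d u B ⊆ circOp d u B' := by
  intro z hz
  refine closure_mono ?_ hz
  rintro _ ⟨f, hf, b, hb, rfl⟩
  exact ⟨f, hf, b, h hb, rfl⟩

theorem smul_mem_closure_circOpGen (hc : ∀ t : T, Continuous fun x : X => t • x)
    {B : Set (CubeStar d → X)} {f : CubeStar d → T} (hf : f ∈ faceGroupStar T d)
    {q : (CubeStar d → Ultrafilter T) × (CubeStar d → X)} (hq : q ∈ closure (circOpGen T d B)) :
    ((fun ε => pure (f ε) * q.1 ε, fun ε => f ε • q.2 ε) : _ × _) ∈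
      closure (circOpGen T d B) := by
  have hcont : Continuous fun q : (CubeStar d → Ultrafilter T) × (CubeStar d → X) =>
      ((fun ε => pure (f ε) * q.1 ε, fun ε => f ε • q.2 ε) : _ × _) :=
    (continuous_pi fun ε => (Ultrafilter.continuous_pure_mul (f ε)).comp
        ((continuous_apply ε).comp continuous_fst)).prodMk
      (continuous_pi fun ε => (hc (f ε)).comp ((continuous_apply ε).comp continuous_snd))
  have hgen : MapsTo (fun q : (CubeStar d → Ultrafilter T) × (CubeStar d → X) =>
      ((fun ε => pure (f ε) * q.1 ε, fun ε => f ε • q.2 ε) : _ × _))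
      (circOpGen T d B) (circOpGen T d B) := by
    rintro _ ⟨f', hf', b, hb, rfl⟩
    refine ⟨f * f', mul_mem hf hf', b, hb, ?_⟩
    simp only [Ultrafilter.pure_mul_pure, mul_smul, Pi.mul_apply]
  exact hgen.closure hcont hq

theorem circOp_circOp_subset (hc : ∀ t : T, Continuous fun x : X => t • x) (hidem : u * u = u)
    (B : Set (CubeStar d → X)) : circOp d u (circOp d u B) ⊆ circOp d u B := by
  intro z hz
  have hcont : Continuous fun q : (CubeStar d → Ultrafilter T) × (CubeStar d → X) =>
      ((fun ε => q.1 ε * u, q.2) : _ × _) :=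
    (continuous_pi fun ε => (Ultrafilter.continuous_mul_left u).comp
        ((continuous_apply ε).comp continuous_fst)).prodMk continuous_snd
  have hgen : MapsTo (fun q : (CubeStar d → Ultrafilter T) × (CubeStar d → X) =>
      ((fun ε => q.1 ε * u, q.2) : _ × _))
      (circOpGen T d (circOp d u B)) (closure (circOpGen T d B)) := by
    rintro _ ⟨f, hf, c, hcB, rfl⟩
    exact smul_mem_closure_circOpGen hc hf (q := (fun _ => u, c)) hcB
  have := hgen.closure_left hcont isClosed_closure hz
  simp only [hidem] at this
  exact this

variable [CompactSpace X] [T2Space X]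

theorem uact_mem_circOp (hidem : u * u = u) {D : Set (CubeStar d → X)} {w : CubeStar d → X}
    (hw : w ∈ D) : (fun ε => uact u (w ε)) ∈ circOp d u D := by
  have hcont : Continuous fun g : CubeStar d → Ultrafilter T =>
      ((g, fun ε => uact (g ε) (w ε)) : _ × _) :=
    continuous_id.prodMk
      (continuous_pi fun ε => (continuous_uact (w ε)).comp (continuous_apply ε))
  have hgen : MapsTo
      (fun g : CubeStar d → Ultrafilter T => ((g, fun ε => uact (g ε) (w ε)) : _ × _))
      (pureFaceGroupStar T d) (circOpGen T d D) := by
    rintro _ ⟨f, hf, rfl⟩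
    exact ⟨f, hf, w, hw, by simp only [uact_pure]⟩
  exact hgen.closure hcont (const_mem_closure_pureFaceGroupStar hidem)

end CircleOperation

section ClosureOperator

variable {T : Type*} [Group T] {X : Type*} [TopologicalSpace X] [MulAction T X] {d : ℕ}
  {u : Ultrafilter T}

theorem clTau_mono {A B : Set X} (h : A ⊆ B) : clTau d u A ⊆ clTau d u B :=
  fun _ ⟨hx, z, hz, hzx⟩ => ⟨hx, z, circOp_mono (image_mono h) hz, hzx⟩

variable [CompactSpace X] [T2Space X]

theorem subset_clTau (hc : ∀ t : T, Continuous fun x : X => t • x) (hidem : u * u = u)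
    {A : Set X} (hA : A ⊆ uact u '' univ) : A ⊆ clTau d u A := by
  intro a ha
  have hfix : uact u a = a := by
    obtain ⟨x, -, rfl⟩ := hA ha
    exact uact_idem hc hidem x
  have hdiag := uact_mem_circOp (d := d) hidem (mem_image_of_mem (fun a _ => a) ha)
  simp only [hfix] at hdiag
  exact ⟨hA ha, _, hdiag, funext fun _ => hfix⟩

theorem clTau_clTau_subset (hc : ∀ t : T, Continuous fun x : X => t • x) (hidem : u * u = u)
    (A : Set X) : clTau d u (clTau d u A) ⊆ clTau d u A := by
  have hdiag : (fun a _ => a) '' clTau d u A ⊆ circOp d u (circOp d u ((fun a _ => a) '' A)) := by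
    rintro _ ⟨y, ⟨-, w, hw, hwy⟩, rfl⟩
    dsimp only at hwy ⊢
    rw [← hwy]
    exact uact_mem_circOp hidem hw
  rintro x ⟨hx, z, hz, hzx⟩
  refine ⟨hx, z, ?_, hzx⟩
  exact circOp_circOp_subset hc hidem _ (circOp_circOp_subset hc hidem _ (circOp_mono hdiag hz))

end ClosureOperator

theorem clTau_is_closure_operator_general
    {T : Type*} [Group T] {X : Type*} [TopologicalSpace X] [CompactSpace X]
    [T2Space X] [MulAction T X] (hc : ∀ t : T, Continuous fun x : X => t • x)
    (d : ℕ) (u : Ultrafilter T) (hidem : u * u = u) :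
    (∀ A : Set X, A ⊆ uact u '' Set.univ → A ⊆ clTau d u A) ∧
    (∀ A B : Set X, A ⊆ B → B ⊆ uact u '' Set.univ → clTau d u A ⊆ clTau d u B) ∧
    (∀ A : Set X, A ⊆ uact u '' Set.univ → clTau d u (clTau d u A) = clTau d u A) :=
  ⟨fun _ hA => subset_clTau hc hidem hA,
    fun _ _ hAB _ => clTau_mono hAB,
    fun A _ => (clTau_clTau_subset hc hidem A).antisymm (subset_clTau hc hidem fun _ hx => hx.1)⟩

/-- The `τ^[d]`-closure is a closure operator on subsets of `uX`. -/
theorem clTau_is_closure_operator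
    {T : Type*} [Group T] {X : Type*} [TopologicalSpace X] [CompactSpace X]
    [T2Space X] [MulAction T X] (hc : ∀ t : T, Continuous fun x : X => t • x)
    (d : ℕ) (M : Set (Ultrafilter T)) (hM : IsMinimalLeftIdeal M)
    (u : Ultrafilter T) (hu : u ∈ M) (hidem : u * u = u) :
    (∀ A : Set X, A ⊆ uact u '' Set.univ → A ⊆ clTau d u A) ∧
    (∀ A B : Set X, A ⊆ B → B ⊆ uact u '' Set.univ → clTau d u A ⊆ clTau d u B) ∧
    (∀ A : Set X, A ⊆ uact u '' Set.univ → clTau d u (clTau d u A) = clTau d u A) :=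
  clTau_is_closure_operator_general hc d u hidem
end

section
/- Left multiplication in G = uM is a homeomorphism of G onto itself with respect to the τ^[d]-topology: for every g ∈ G and every τ^[d]-closed subset A ⊆ G, Ag is τ^[d]-closed. -/
attribute [local instance] Ultrafilter.mul Ultrafilter.semigroup

/-- The circle operation `u^[d]_* ∘ B` for the face group acting on `(βT)^{2^d-1}`
by left multiplication. -/
def circOpM {T : Type*} [Group T] (d : ℕ) (u : Ultrafilter T)
    (B : Set (CubeStar d → Ultrafilter T)) : Set (CubeStar d → Ultrafilter T) :=
  {z | (((fun _ => u) : CubeStar d → Ultrafilter T), z) ∈ closure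
    {q : (CubeStar d → Ultrafilter T) × (CubeStar d → Ultrafilter T) |
      ∃ f ∈ faceGroupStar T d, ∃ b ∈ B,
        q = (fun ε => (pure (f ε) : Ultrafilter T), fun ε => (pure (f ε) : Ultrafilter T) * b ε)}}

/-- The `τ^[d]`-closure of a subset `A` of `G = uM`:
`cl(A) = {g ∈ G : g^[d]_* ∈ u^[d]_*(u^[d]_* ∘ Δ^[d]_*(A))}`. -/
def clTauG {T : Type*} [Group T] (d : ℕ) (M : Set (Ultrafilter T)) (u : Ultrafilter T)
    (A : Set (Ultrafilter T)) : Set (Ultrafilter T) :=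
  {g | g ∈ (fun p => u * p) '' M ∧
    (fun _ : CubeStar d => g) ∈
      (fun z : CubeStar d → Ultrafilter T => fun ε => u * z ε) ''
        circOpM d u ((fun a : Ultrafilter T => fun _ : CubeStar d => a) '' A)}

/-!
Right multiplication by `g` is continuous on `βT` and commutes with the left action of the face
group, so, being a closed map of the compact Hausdorff space `(βT)^{2^d-1}`, it passes through the
closure defining `u ∘ ·`; this gives `u(u ∘ Δ(Ag)) = u(u ∘ Δ(A))·g` and hence `cl(Ag) ⊇ cl(A)·g`.
For the reverse inclusion, `g` is cancelled with its inverse in the group `G = uM`; this works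
because the points of `u ∘ Δ(A)` lie in the closed left ideal `M`, on which `u` is a right identity.
-/

lemma mul_eq_self_of_mem_image_mul_left {S : Type*} [Semigroup S] {u x : S} {M : Set S}
    (hidem : u * u = u) (hx : x ∈ (fun p => u * p) '' M) : u * x = x := by
  obtain ⟨p, -, rfl⟩ := hx
  rw [← mul_assoc, hidem]

lemma setOf_mem_closure_image_prodMap_id {X Y : Type*} [TopologicalSpace X]
    [TopologicalSpace Y] [CompactSpace X] [CompactSpace Y] [T2Space X] [T2Space Y]
    {ψ : Y → Y} (hψ : Continuous ψ) (c : X) (S : Set (X × Y)) :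
    {y | (c, y) ∈ closure (Prod.map id ψ '' S)} = ψ '' {y | (c, y) ∈ closure S} := by
  have hΦ : Continuous (Prod.map id ψ : X × Y → X × Y) := continuous_id.prodMap hψ
  rw [hΦ.isClosedMap.closure_image_eq_of_continuous hΦ]
  ext y
  constructor
  · rintro ⟨⟨x, y'⟩, hS, hxy⟩
    obtain ⟨rfl, rfl⟩ := Prod.mk.inj hxy
    exact ⟨y', hS, rfl⟩
  · rintro ⟨y', hS, rfl⟩
    exact ⟨(c, y'), hS, rfl⟩

namespace IsMinimalLeftIdeal

variable {T : Type*} [Group T] {M : Set (Ultrafilter T)} {u p g : Ultrafilter T}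

lemma range_mul_right (hM : IsMinimalLeftIdeal M) (hp : p ∈ M) :
    Set.range (· * p) = M := by
  refine hM.2 _ ?_ ⟨⟨p * p, p, rfl⟩, ?_⟩
  · rintro _ ⟨q, rfl⟩
    exact hM.1.2 p hp q
  · rintro _ ⟨q, rfl⟩ q'
    exact ⟨q' * q, mul_assoc q' q p⟩

lemma isClosed (hM : IsMinimalLeftIdeal M) : IsClosed M := by
  obtain ⟨p, hp⟩ := hM.1.1
  rw [← hM.range_mul_right hp, ← Set.image_univ]
  exact (isCompact_univ.image (Ultrafilter.continuous_mul_left p)).isClosed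

lemma image_mul_left_subset (hM : IsMinimalLeftIdeal M) : (fun p => u * p) '' M ⊆ M := by
  rintro _ ⟨p, hp, rfl⟩
  exact hM.1.2 p hp u

lemma mul_mem_image_mul_left (hM : IsMinimalLeftIdeal M) {x : Ultrafilter T}
    (hx : x ∈ (fun p => u * p) '' M) (hp : p ∈ M) : x * p ∈ (fun p => u * p) '' M := by
  obtain ⟨q, hq, rfl⟩ := hx
  exact ⟨q * p, hM.1.2 p hp q, (mul_assoc u q p).symm⟩

lemma mul_eq_self_of_idempotent (hM : IsMinimalLeftIdeal M) (hu : u ∈ M) (hidem : u * u = u)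
    (hp : p ∈ M) : p * u = p := by
  have hfix : {q ∈ M | q * u = q} = M := by
    refine hM.2 _ (Set.sep_subset _ _) ⟨⟨u, hu, hidem⟩, ?_⟩
    rintro q ⟨hqM, hqu⟩ q'
    exact ⟨hM.1.2 q hqM q', by rw [mul_assoc, hqu]⟩
  exact (hfix.symm ▸ hp : p ∈ {q ∈ M | q * u = q}).2

lemma exists_left_inverse (hM : IsMinimalLeftIdeal M) (hu : u ∈ M) (hidem : u * u = u)
    (hg : g ∈ (fun p => u * p) '' M) : ∃ g' ∈ (fun p => u * p) '' M, g' * g = u := by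
  obtain ⟨m, hm : m * g = u⟩ : u ∈ Set.range (· * g) :=
    (hM.range_mul_right (hM.image_mul_left_subset hg)).symm ▸ hu
  refine ⟨u * (m * u), ⟨m * u, hM.1.2 u hu m, rfl⟩, ?_⟩
  calc u * (m * u) * g = u * (m * (u * g)) := by simp only [mul_assoc]
    _ = u := by rw [mul_eq_self_of_mem_image_mul_left hidem hg, hm, hidem]

lemma exists_inverse (hM : IsMinimalLeftIdeal M) (hu : u ∈ M) (hidem : u * u = u)
    (hg : g ∈ (fun p => u * p) '' M) :
    ∃ g' ∈ (fun p => u * p) '' M, g' * g = u ∧ g * g' = u := by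
  obtain ⟨g', hg', hg'g⟩ := hM.exists_left_inverse hu hidem hg
  obtain ⟨g'', hg'', hg''g'⟩ := hM.exists_left_inverse hu hidem hg'
  have hg''_eq : g'' = g :=
    calc g'' = g'' * (g' * g) := by
          rw [hg'g, hM.mul_eq_self_of_idempotent hu hidem (hM.image_mul_left_subset hg'')]
      _ = g := by rw [← mul_assoc, hg''g', mul_eq_self_of_mem_image_mul_left hidem hg]
  exact ⟨g', hg', hg'g, hg''_eq ▸ hg''g'⟩

end IsMinimalLeftIdeal

section CircOp

variable {T : Type*} [Group T] {d : ℕ}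

lemma circOpM_image_mul_right (u g : Ultrafilter T) (B : Set (CubeStar d → Ultrafilter T)) :
    circOpM d u ((fun b ε => b ε * g) '' B) = (fun z ε => z ε * g) '' circOpM d u B := by
  have hψ : Continuous fun (z : CubeStar d → Ultrafilter T) ε => z ε * g :=
    continuous_pi fun ε => (Ultrafilter.continuous_mul_left g).comp (continuous_apply ε)
  refine Eq.trans ?_ (setOf_mem_closure_image_prodMap_id hψ _ _)
  unfold circOpM
  congr! 4
  ext q
  constructor
  · rintro ⟨f, hf, _, ⟨b, hb, rfl⟩, rfl⟩
    exact ⟨_, ⟨f, hf, b, hb, rfl⟩, by simp only [Prod.map, id, mul_assoc]⟩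
  · rintro ⟨_, ⟨f, hf, b, hb, rfl⟩, rfl⟩
    exact ⟨f, hf, _, ⟨b, hb, rfl⟩, by simp only [Prod.map, id, mul_assoc]⟩

lemma circOpM_subset_pi {M : Set (Ultrafilter T)} (hM : IsMinimalLeftIdeal M)
    (u : Ultrafilter T) {B : Set (CubeStar d → Ultrafilter T)}
    (hB : B ⊆ Set.univ.pi fun _ => M) : circOpM d u B ⊆ Set.univ.pi fun _ => M := by
  have hclosed : IsClosed ((Set.univ : Set (CubeStar d → Ultrafilter T)) ×ˢ
      Set.univ.pi fun _ : CubeStar d => M) :=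
    isClosed_univ.prod (isClosed_set_pi fun _ _ => hM.isClosed)
  refine fun z hz => (closure_minimal ?_ hclosed hz).2
  rintro _ ⟨f, -, b, hb, rfl⟩
  exact ⟨trivial, fun ε _ => hM.1.2 _ (hB hb ε trivial) _⟩

end CircOp

lemma clTauG_image_mul_right {T : Type*} [Group T] {d : ℕ} {M : Set (Ultrafilter T)}
    (hM : IsMinimalLeftIdeal M) {u : Ultrafilter T} (hu : u ∈ M) (hidem : u * u = u)
    {g : Ultrafilter T} (hg : g ∈ (fun p => u * p) '' M) {A : Set (Ultrafilter T)}
    (hA : A ⊆ M) :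
    clTauG d M u ((fun a => a * g) '' A) = (fun a => a * g) '' clTauG d M u A := by
  have hgM := hM.image_mul_left_subset hg
  have hdiag : (fun a (_ : CubeStar d) => a) '' ((fun a => a * g) '' A) =
      (fun b ε => b ε * g) '' ((fun a (_ : CubeStar d) => a) '' A) := by
    simp only [Set.image_image]
  unfold clTauG
  rw [hdiag, circOpM_image_mul_right]
  ext h
  constructor
  · rintro ⟨hh, _, ⟨z, hz, rfl⟩, hzh⟩
    obtain ⟨g', hg', hg'g, hgg'⟩ := hM.exists_inverse hu hidem hg
    have hzM := circOpM_subset_pi hM u (Set.image_subset_iff.2 fun a ha _ _ => hA ha) hz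
    refine ⟨h * g', ⟨hM.mul_mem_image_mul_left hh (hM.image_mul_left_subset hg'), z, hz,
      funext fun ε => ?_⟩, ?_⟩
    · calc u * z ε = u * z ε * (g * g') := by
            rw [hgg', hM.mul_eq_self_of_idempotent hu hidem (hM.1.2 _ (hzM ε trivial) u)]
        _ = h * g' := by rw [← congrFun hzh ε]; simp only [mul_assoc]
    · show h * g' * g = h
      rw [mul_assoc, hg'g, hM.mul_eq_self_of_idempotent hu hidem (hM.image_mul_left_subset hh)]
  · rintro ⟨k, ⟨hk, z, hz, hzk⟩, rfl⟩
    refine ⟨hM.mul_mem_image_mul_left hk hgM, _, ⟨z, hz, rfl⟩, funext fun ε => ?_⟩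
    show u * (z ε * g) = k * g
    rw [← mul_assoc, show u * z ε = k from congrFun hzk ε]

/-- Left multiplication in `G = uM` is a `τ^[d]`-homeomorphism: for every `g ∈ G`
and every `τ^[d]`-closed `A ⊆ G`, the translate `Ag` is `τ^[d]`-closed. -/
theorem left_multiplication_tau_d_homeomorphism
    {T : Type*} [Group T] (d : ℕ) (M : Set (Ultrafilter T))
    (hM : IsMinimalLeftIdeal M) (u : Ultrafilter T) (hu : u ∈ M) (hidem : u * u = u)
    (g : Ultrafilter T) (hg : g ∈ (fun p => u * p) '' M)
    (A : Set (Ultrafilter T)) (hA : A ⊆ (fun p => u * p) '' M)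
    (hAclosed : clTauG d M u A = A) :
    clTauG d M u ((fun a => a * g) '' A) = (fun a => a * g) '' A := by
  rw [clTauG_image_mul_right hM hu hidem hg (hA.trans hM.image_mul_left_subset), hAclosed]
end
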